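/- arXiv:2505.07002 — 2 statements merged into one kernel-verified Lean document; each statement's English description precedes it below -/
import Mathlib

section
/- The Petersen graph has no proper 3-edge-coloring. -/
/-- A proper 3-edge-coloring of a graph: distinct edges sharing a vertex get distinct colors. -/
def IsProper3EdgeColoring {V : Type*} (G : SimpleGraph V) (c : Sym2 V → Fin 3) : Prop :=
  ∀ e ∈ G.edgeSet, ∀ f ∈ G.edgeSet, e ≠ f → (∃ v, v ∈ e ∧ v ∈ f) → c e ≠ c f

/-- The Petersen graph, presented as the Kneser graph K(5,2): vertices are the 2-element
subsets of a 5-element set, adjacent iff disjoint. -/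
def petersenGraph : SimpleGraph {s : Finset (Fin 5) // s.card = 2} where
  Adj a b := Disjoint (a : Finset (Fin 5)) (b : Finset (Fin 5))
  symm := ⟨fun _ _ h => Disjoint.symm h⟩
  loopless := by
    constructor
    intro a h
    rw [disjoint_self] at h
    have := a.2
    rw [h] at this
    simp at this

instance : DecidableRel petersenGraph.Adj :=
  fun a b => inferInstanceAs (Decidable (Disjoint (a : Finset (Fin 5)) (b : Finset (Fin 5))))

/-- Compatibility of assigning color `col` to edge `i` given previously assigned colors `acc`. -/
def pcompat (conf : Nat → Nat → Bool) (i col : Nat) (acc : List Nat) : Bool :=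
  (List.range i).all fun j => !(conf i j) || decide (acc.getD j 99 ≠ col)

/-- Backtracking search for a proper coloring extending `acc` by `n` more edges. -/
def psearch (conf : Nat → Nat → Bool) : Nat → List Nat → Bool
  | 0, _ => true
  | n+1, acc =>
    (List.range 3).any fun col =>
      pcompat conf acc.length col acc && psearch conf n (acc ++ [col])

lemma psearch_complete (conf : Nat → Nat → Bool) (c : Nat → Nat) (h3 : ∀ i, c i < 3)
    (hc : ∀ i j, j < i → conf i j = true → c i ≠ c j) :
    ∀ n i, psearch conf n ((List.range i).map c) = true := by
  intro n
  induction n with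
  | zero => intro i; rfl
  | succ n ih =>
    intro i
    have hlen : ((List.range i).map c).length = i := by simp
    rw [psearch]
    apply List.any_eq_true.mpr
    refine ⟨c i, by simpa using h3 i, ?_⟩
    rw [Bool.and_eq_true]
    constructor
    · unfold pcompat
      rw [hlen]
      apply List.all_eq_true.mpr
      intro j hj
      rw [List.mem_range] at hj
      have hg : ((List.range i).map c).getD j 99 = c j := by
        rw [List.getD_eq_getElem _ _ (by simpa using hj)]
        simp
      by_cases hcf : conf i j = true
      · simp only [hcf, hg, Bool.not_true, Bool.false_or, decide_eq_true_eq]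
        exact fun h => hc i j hj hcf h.symm
      · simp [hcf]
    · have hext : (List.range i).map c ++ [c i] = (List.range (i+1)).map c := by
        rw [List.range_succ, List.map_append]; rfl
      rw [hext]
      exact ih (i+1)

/-- The ten vertices of the Petersen graph. -/
def pVerts : Fin 10 → {s : Finset (Fin 5) // s.card = 2} :=
  ![⟨{0,1}, by decide⟩, ⟨{0,2}, by decide⟩, ⟨{0,3}, by decide⟩, ⟨{0,4}, by decide⟩,
    ⟨{1,2}, by decide⟩, ⟨{1,3}, by decide⟩, ⟨{1,4}, by decide⟩, ⟨{2,3}, by decide⟩,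
    ⟨{2,4}, by decide⟩, ⟨{3,4}, by decide⟩]

/-- Endpoint indices of the fifteen edges. -/
def pEnds : List (Nat × Nat) :=
  [(0,7),(0,8),(0,9),(1,5),(1,6),(1,9),(2,4),(2,6),(2,8),(3,4),(3,5),(3,7),(4,9),(5,8),(6,7)]

/-- The fifteen edges of the Petersen graph. -/
def pE : Fin 15 → Sym2 {s : Finset (Fin 5) // s.card = 2} :=
  ![s(pVerts 0, pVerts 7), s(pVerts 0, pVerts 8), s(pVerts 0, pVerts 9),
    s(pVerts 1, pVerts 5), s(pVerts 1, pVerts 6), s(pVerts 1, pVerts 9),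
    s(pVerts 2, pVerts 4), s(pVerts 2, pVerts 6), s(pVerts 2, pVerts 8),
    s(pVerts 3, pVerts 4), s(pVerts 3, pVerts 5), s(pVerts 3, pVerts 7),
    s(pVerts 4, pVerts 9), s(pVerts 5, pVerts 8), s(pVerts 6, pVerts 7)]

/-- Conflict relation on edge indices: distinct edges sharing an endpoint. -/
def pConf : Nat → Nat → Bool := fun i j =>
  decide (i < 15) && decide (j < 15) && decide (i ≠ j) &&
    (let a := pEnds.getD i (100, 101)
     let b := pEnds.getD j (102, 103)
     decide (a.1 = b.1) || decide (a.1 = b.2) || decide (a.2 = b.1) || decide (a.2 = b.2))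

lemma pMem : ∀ i : Fin 15, pE i ∈ petersenGraph.edgeSet := by decide

lemma pBridge : ∀ i j : Fin 15, pConf i j = true →
    pE i ≠ pE j ∧ ∃ v, v ∈ pE i ∧ v ∈ pE j := by decide

lemma psearch_false : psearch pConf 15 [] = false := by decide

/-- The Petersen graph has no proper 3-edge-coloring. -/
theorem petersen_not_three_edge_colorable :
    ¬ ∃ c : Sym2 {s : Finset (Fin 5) // s.card = 2} → Fin 3,
        IsProper3EdgeColoring petersenGraph c := by
  rintro ⟨c, hc⟩
  let cn : Nat → Nat := fun i => if h : i < 15 then (c (pE ⟨i, h⟩)).val else 0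
  have h3 : ∀ i, cn i < 3 := by
    intro i
    simp only [cn]
    split
    · exact (c _).isLt
    · omega
  have hcc : ∀ i j, j < i → pConf i j = true → cn i ≠ cn j := by
    intro i j hji hconf
    have hi : i < 15 := by
      by_contra h
      simp [pConf, h] at hconf
    have hj : j < 15 := by
      by_contra h
      simp [pConf, h] at hconf
    obtain ⟨hne, hsh⟩ := pBridge ⟨i, hi⟩ ⟨j, hj⟩ hconf
    have := hc _ (pMem ⟨i, hi⟩) _ (pMem ⟨j, hj⟩) hne hsh
    simp only [cn, dif_pos hi, dif_pos hj]
    exact fun h => this (Fin.val_injective h)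
  have htrue := psearch_complete pConf cn h3 hcc 15 0
  rw [show (List.range 0).map cn = [] from rfl, psearch_false] at htrue
  exact Bool.false_ne_true htrue
end

section
/- Let G be a cubic graph and let F = {e1, e2, e3} be an edge cut of size 3 separating G into components C1 and C2. For i = 1,2 let Gi be the cubic graph obtained from Ci by adding a new vertex joined to the three endpoints of e1, e2, e3 lying in Ci. Then G admits a proper 3-edge-coloring if and only if both G1 and G2 do. -/
lemma proper_of_pairwise {V : Type*} (G : SimpleGraph V) (c : Sym2 V → Fin 3)
    (h : ∀ v q q', G.Adj v q → G.Adj v q' → q ≠ q' → c s(v, q) ≠ c s(v, q')) :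
    IsProper3EdgeColoring G c := by
  rintro e he f hf hef ⟨v, hve, hvf⟩
  obtain ⟨q, rfl⟩ := Sym2.mem_iff_exists.mp hve
  obtain ⟨q', rfl⟩ := Sym2.mem_iff_exists.mp hvf
  rw [SimpleGraph.mem_edgeSet] at he hf
  exact h v q q' he hf (fun hq => hef (by rw [hq]))

lemma pairwise_of_proper {V : Type*} {G : SimpleGraph V} {c : Sym2 V → Fin 3}
    (hc : IsProper3EdgeColoring G c) {v q q' : V}
    (h1 : G.Adj v q) (h2 : G.Adj v q') (hne : q ≠ q') :
    c s(v, q) ≠ c s(v, q') := by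
  refine hc _ h1 _ h2 ?_ ⟨v, Sym2.mem_mk_left _ _, Sym2.mem_mk_left _ _⟩
  intro h
  rw [Sym2.eq_iff] at h
  rcases h with ⟨_, rfl⟩ | ⟨rfl, rfl⟩
  · exact hne rfl
  · exact h1.ne rfl

lemma even_card_of_invol {α : Type*} [DecidableEq α] (g : α → α) :
    ∀ s : Finset α, (∀ x ∈ s, g x ∈ s) → (∀ x ∈ s, g (g x) = x) → (∀ x ∈ s, g x ≠ x) →
      Even s.card := by
  intro s
  induction s using Finset.strongInduction with
  | _ s ih =>
    intro h1 h2 h3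
    rcases s.eq_empty_or_nonempty with rfl | ⟨x, hx⟩
    · simp
    · have hgx : g x ∈ s := h1 x hx
      have hgxx : g x ≠ x := h3 x hx
      set t := (s.erase x).erase (g x) with ht
      have htmem : ∀ y, y ∈ t ↔ y ≠ g x ∧ y ≠ x ∧ y ∈ s := by
        intro y; simp [ht, Finset.mem_erase, and_assoc]
      have hts : t ⊂ s :=
        Finset.ssubset_of_subset_of_ssubset
          ((s.erase x).erase_subset _) (Finset.erase_ssubset hx)
      have h1' : ∀ y ∈ t, g y ∈ t := by
        intro y hy
        obtain ⟨hygx, hyx, hys⟩ := (htmem y).1 hy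
        refine (htmem (g y)).2 ⟨?_, ?_, h1 y hys⟩
        · intro h
          exact hyx (by rw [← h2 y hys, h, h2 x hx])
        · intro h
          exact hygx (by rw [← h2 y hys, h])
      have h2' : ∀ y ∈ t, g (g y) = y := fun y hy => h2 y ((htmem y).1 hy).2.2
      have h3' : ∀ y ∈ t, g y ≠ y := fun y hy => h3 y ((htmem y).1 hy).2.2
      have hcard : t.card = s.card - 2 := by
        rw [ht, Finset.card_erase_of_mem, Finset.card_erase_of_mem hx]
        · omega
        · exact Finset.mem_erase.2 ⟨hgxx, hgx⟩
      have h2le : 2 ≤ s.card := by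
        have : ({x, g x} : Finset α) ⊆ s := by
          intro y hy; simp at hy; rcases hy with rfl | rfl <;> assumption
        calc 2 = ({x, g x} : Finset α).card := by
                rw [Finset.card_insert_of_notMem (by simpa using hgxx.symm)]; simp
             _ ≤ s.card := Finset.card_le_card this
      have := ih t hts h1' h2' h3'
      rw [hcard] at this
      rw [Nat.even_iff] at this ⊢
      omega

lemma exists_unique_nbr {W : Type*} [Fintype W] {G : SimpleGraph W}
    (hcubic : ∀ v, (G.neighborSet v).ncard = 3) {c : Sym2 W → Fin 3}
    (hc : IsProper3EdgeColoring G c) (v : W) (k : Fin 3) :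
    ∃! w, G.Adj v w ∧ c s(v, w) = k := by
  have hinj : Set.InjOn (fun w => c s(v, w)) (G.neighborSet v) := by
    intro w hw w' hw' he
    by_contra hne
    exact pairwise_of_proper hc hw hw' hne he
  have himg : (fun w => c s(v, w)) '' (G.neighborSet v) = Set.univ := by
    apply Set.eq_of_subset_of_ncard_le (Set.subset_univ _)
    rw [Set.ncard_univ, Set.ncard_image_of_injOn hinj, hcubic v]
    simp [Nat.card_eq_fintype_card]
  have hk : k ∈ (fun w => c s(v, w)) '' (G.neighborSet v) := himg ▸ Set.mem_univ k
  obtain ⟨w, hw, hcw⟩ := hk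
  refine ⟨w, ⟨hw, hcw⟩, ?_⟩
  rintro w' ⟨hw', hcw'⟩
  by_contra hne
  exact pairwise_of_proper hc hw' hw hne (hcw'.trans hcw.symm)

lemma cut_inj {V W : Type*} [Fintype V] [Fintype W] {G : SimpleGraph W}
    (hcubic : ∀ v, (G.neighborSet v).ncard = 3)
    {ι : V → W} (hι : Function.Injective ι)
    {a : Fin 3 → V} {m : Fin 3 → W} (ha : Function.Injective a)
    (hm : ∀ i, G.Adj (ι (a i)) (m i))
    (hmι : ∀ i y, m i ≠ ι y)
    (hclass : ∀ x w, G.Adj (ι x) w → (∃ y, w = ι y) ∨ ∃ i, x = a i ∧ w = m i)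
    {c : Sym2 W → Fin 3} (hc : IsProper3EdgeColoring G c) :
    Function.Injective (fun i => c s(ι (a i), m i)) := by
  classical
  set N : V → Fin 3 → W := fun x k => (exists_unique_nbr hcubic hc (ι x) k).exists.choose
    with hN
  have hNspec : ∀ x k, G.Adj (ι x) (N x k) ∧ c s(ι x, N x k) = k := by
    intro x k
    exact (exists_unique_nbr hcubic hc (ι x) k).exists.choose_spec
  have hNuniq : ∀ x k w, G.Adj (ι x) w → c s(ι x, w) = k → w = N x k := by
    intro x k w h1 h2
    exact (exists_unique_nbr hcubic hc (ι x) k).unique ⟨h1, h2⟩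
      ((exists_unique_nbr hcubic hc (ι x) k).exists.choose_spec)
  set n : Fin 3 → ℕ := fun k => (Finset.univ.filter fun i => c s(ι (a i), m i) = k).card
    with hn
  -- parity claim
  have hpar : ∀ k, n k % 2 = Fintype.card V % 2 := by
    intro k
    set B : Finset V := Finset.univ.filter (fun x => ∃ y, N x k = ι y) with hB
    set A : Finset V := Finset.univ.filter (fun x => ¬ ∃ y, N x k = ι y) with hA
    have hAB : B.card + A.card = Fintype.card V := by
      rw [hB, hA, Finset.card_filter_add_card_filter_not, Finset.card_univ]
    -- the involution on B
    set g : V → V := fun x => if h : ∃ y, N x k = ι y then h.choose else x with hg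
    have key : ∀ x, (∃ y, N x k = ι y) → N x k = ι (g x) ∧ N (g x) k = ι x := by
      intro x hx
      have h1 : N x k = ι (g x) := by
        rw [hg]; simp only [dif_pos hx]; exact hx.choose_spec
      refine ⟨h1, ?_⟩
      have hadj : G.Adj (ι x) (N x k) := (hNspec x k).1
      have hadj2 : G.Adj (ι (g x)) (ι x) := by rw [← h1]; exact hadj.symm
      have hcol : c s(ι (g x), ι x) = k := by
        rw [Sym2.eq_swap]
        have := (hNspec x k).2
        rw [h1] at this; exact this
      exact (hNuniq (g x) k (ι x) hadj2 hcol).symm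
    have hBeven : Even B.card := by
      apply even_card_of_invol g B
      · intro x hxB
        have hx : ∃ y, N x k = ι y := (Finset.mem_filter.1 hxB).2
        exact Finset.mem_filter.2 ⟨Finset.mem_univ _, ⟨x, (key x hx).2⟩⟩
      · intro x hxB
        have hx : ∃ y, N x k = ι y := (Finset.mem_filter.1 hxB).2
        have h2 : ∃ y, N (g x) k = ι y := ⟨x, (key x hx).2⟩
        have h3 : N (g x) k = ι (g (g x)) := (key (g x) h2).1
        exact hι (by rw [← h3, (key x hx).2])
      · intro x hxB h
        have hx : ∃ y, N x k = ι y := (Finset.mem_filter.1 hxB).2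
        have h1 : N x k = ι x := by rw [(key x hx).1, h]
        have := (hNspec x k).1
        rw [h1] at this
        exact this.ne rfl
    have hcardA : n k = A.card := by
      rw [hn]
      apply Finset.card_bij (fun i _ => a i)
      · intro i hi
        have hik : c s(ι (a i), m i) = k := (Finset.mem_filter.1 hi).2
        have hNi : N (a i) k = m i := (hNuniq (a i) k (m i) (hm i) hik).symm
        refine Finset.mem_filter.2 ⟨Finset.mem_univ _, ?_⟩
        rintro ⟨y, hy⟩
        rw [hNi] at hy
        exact hmι i y hy
      · intro i _ j _ hij; exact ha hij
      · intro x hxA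
        have hx : ¬ ∃ y, N x k = ι y := (Finset.mem_filter.1 hxA).2
        rcases hclass x (N x k) (hNspec x k).1 with ⟨y, hy⟩ | ⟨i, rfl, hmi⟩
        · exact absurd ⟨y, hy⟩ hx
        · refine ⟨i, Finset.mem_filter.2 ⟨Finset.mem_univ _, ?_⟩, rfl⟩
          rw [← hmi]; exact (hNspec (a i) k).2
    rw [Nat.even_iff] at hBeven
    omega
  have hsum : ∑ k : Fin 3, n k = 3 := by
    have := Finset.card_eq_sum_card_fiberwise
      (f := fun i : Fin 3 => c s(ι (a i), m i)) (s := Finset.univ) (t := Finset.univ)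
      (fun x _ => Finset.mem_univ _)
    simpa [hn] using this.symm
  have hone : ∀ k, n k = 1 := by
    have h0 := hpar 0
    have h1 := hpar 1
    have h2 := hpar 2
    rw [Fin.sum_univ_three] at hsum
    have hall : n 0 = 1 ∧ n 1 = 1 ∧ n 2 = 1 := by omega
    intro k
    fin_cases k
    · exact hall.1
    · exact hall.2.1
    · exact hall.2.2
  intro i j hij
  by_contra hne
  set k := c s(ι (a i), m i) with hk
  have hik : i ∈ Finset.univ.filter fun i' => c s(ι (a i'), m i') = k :=
    Finset.mem_filter.2 ⟨Finset.mem_univ _, rfl⟩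
  have hjk : j ∈ Finset.univ.filter fun i' => c s(ι (a i'), m i') = k :=
    Finset.mem_filter.2 ⟨Finset.mem_univ _, by simpa using hij.symm⟩
  have : 1 < n k := Finset.one_lt_card.2 ⟨i, hik, j, hjk, hne⟩
  rw [hone k] at this
  exact lt_irrefl 1 this

lemma optAdj_some_some {V : Type*} (R : V → V → Prop) (hR : Symmetric R) (a : Fin 3 → V)
    (x y : V) :
    (SimpleGraph.fromRel (fun p q : Option V =>
      (∃ x y, p = some x ∧ q = some y ∧ R x y) ∨ (p = none ∧ ∃ i, q = some (a i)))).Adj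
      (some x) (some y) ↔ x ≠ y ∧ R x y := by
  rw [SimpleGraph.fromRel_adj]
  constructor
  · rintro ⟨hne, h | h⟩
    · rcases h with ⟨x', y', hx, hy, hR'⟩ | ⟨h, -⟩
      · injection hx with hx; injection hy with hy; subst hx; subst hy
        exact ⟨fun h => hne (by rw [h]), hR'⟩
      · exact absurd h (by simp)
    · rcases h with ⟨x', y', hx, hy, hR'⟩ | ⟨h, -⟩
      · injection hx with hx; injection hy with hy; subst hx; subst hy
        exact ⟨fun h => hne (by rw [h]), hR hR'⟩
      · exact absurd h (by simp)
  · rintro ⟨hne, hR'⟩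
    exact ⟨by simpa using hne, Or.inl (Or.inl ⟨x, y, rfl, rfl, hR'⟩)⟩

lemma optAdj_none_some {V : Type*} (R : V → V → Prop) (a : Fin 3 → V) (y : V) :
    (SimpleGraph.fromRel (fun p q : Option V =>
      (∃ x y, p = some x ∧ q = some y ∧ R x y) ∨ (p = none ∧ ∃ i, q = some (a i)))).Adj
      none (some y) ↔ ∃ i, y = a i := by
  rw [SimpleGraph.fromRel_adj]
  constructor
  · rintro ⟨-, h | h⟩
    · rcases h with ⟨x', y', hx, -, -⟩ | ⟨-, i, hy⟩
      · exact absurd hx (by simp)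
      · injection hy with hy; exact ⟨i, hy⟩
    · rcases h with ⟨x', y', -, hy, -⟩ | ⟨h, -⟩
      · exact absurd hy (by simp)
      · exact absurd h (by simp)
  · rintro ⟨i, rfl⟩
    exact ⟨by simp, Or.inl (Or.inr ⟨rfl, i, rfl⟩)⟩

lemma optAdj_some_none {V : Type*} (R : V → V → Prop) (a : Fin 3 → V) (x : V) :
    (SimpleGraph.fromRel (fun p q : Option V =>
      (∃ x y, p = some x ∧ q = some y ∧ R x y) ∨ (p = none ∧ ∃ i, q = some (a i)))).Adj
      (some x) none ↔ ∃ i, x = a i := by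
  rw [SimpleGraph.adj_comm]
  exact optAdj_none_some R a x

lemma side_coloring {V W : Type*} [Fintype V] [Fintype W] {G : SimpleGraph W}
    (hcubic : ∀ v, (G.neighborSet v).ncard = 3)
    {ι : V → W} (hι : Function.Injective ι)
    {a : Fin 3 → V} {m : Fin 3 → W} (ha : Function.Injective a)
    (hm : ∀ i, G.Adj (ι (a i)) (m i))
    (hmι : ∀ i y, m i ≠ ι y)
    (hclass : ∀ x w, G.Adj (ι x) w → (∃ y, w = ι y) ∨ ∃ i, x = a i ∧ w = m i)
    {c : Sym2 W → Fin 3} (hc : IsProper3EdgeColoring G c) :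
    ∃ c', IsProper3EdgeColoring (SimpleGraph.fromRel (fun p q : Option V =>
      (∃ x y, p = some x ∧ q = some y ∧ G.Adj (ι x) (ι y)) ∨
      (p = none ∧ ∃ i, q = some (a i)))) c' := by
  classical
  set R : V → V → Prop := fun x y => G.Adj (ι x) (ι y) with hRdef
  have hR : Symmetric R := fun x y h => h.symm
  set g : V → Fin 3 := fun x => if h : ∃ i, x = a i then c s(ι x, m h.choose) else 0 with hgdef
  have hg : ∀ i, g (a i) = c s(ι (a i), m i) := by
    intro i
    have hex : ∃ j, a i = a j := ⟨i, rfl⟩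
    have : hex.choose = i := (ha hex.choose_spec).symm
    rw [hgdef]
    simp only [dif_pos hex, this]
  set F : Option V → Option V → Fin 3 := fun p q =>
    match p, q with
    | some x, some y => c s(ι x, ι y)
    | some x, none => g x
    | none, some y => g y
    | none, none => 0 with hF
  have hFsymm : ∀ p q, F p q = F q p := by
    rintro (_ | x) (_ | y) <;> simp only [hF]
    exact congrArg c (Sym2.eq_swap)
  refine ⟨Sym2.lift ⟨F, hFsymm⟩, ?_⟩
  apply proper_of_pairwise
  rintro (_ | x) (_ | q) (_ | q') hq hq' hne
  · exact absurd rfl hne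
  · exact (hq.ne rfl).elim
  · exact (hq'.ne rfl).elim
  · -- v = none, q = some q, q' = some q'
    obtain ⟨i, rfl⟩ := (optAdj_none_some R a q).1 hq
    obtain ⟨j, rfl⟩ := (optAdj_none_some R a q').1 hq'
    have hij : i ≠ j := fun h => hne (by rw [h])
    simp only [Sym2.lift_mk]
    show F none (some (a i)) ≠ F none (some (a j))
    simp only [hF, hg]
    exact fun h => hij (cut_inj hcubic hι ha hm hmι hclass hc h)
  · exact absurd rfl hne
  · -- v = some x, q = none, q' = some q'
    obtain ⟨i, rfl⟩ := (optAdj_some_none R a x).1 hq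
    have hadj' : R (a i) q' := ((optAdj_some_some R hR a (a i) q').1 hq').2
    simp only [Sym2.lift_mk]
    show F (some (a i)) none ≠ F (some (a i)) (some q')
    simp only [hF, hg]
    exact pairwise_of_proper hc (hm i) hadj' (fun h => hmι i q' h)
  · -- v = some x, q = some q, q' = none
    obtain ⟨i, rfl⟩ := (optAdj_some_none R a x).1 hq'
    have hadj' : R (a i) q := ((optAdj_some_some R hR a (a i) q).1 hq).2
    simp only [Sym2.lift_mk]
    show F (some (a i)) (some q) ≠ F (some (a i)) none
    simp only [hF, hg]
    exact (pairwise_of_proper hc (hm i) hadj' (fun h => hmι i q h)).symm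
  · -- v = some x, q = some q, q' = some q'
    have h1 : R x q := ((optAdj_some_some R hR a x q).1 hq).2
    have h2 : R x q' := ((optAdj_some_some R hR a x q').1 hq').2
    have hqq' : q ≠ q' := fun h => hne (by rw [h])
    simp only [Sym2.lift_mk]
    show F (some x) (some q) ≠ F (some x) (some q')
    simp only [hF]
    exact pairwise_of_proper hc h1 h2 (fun h => hqq' (hι h))

/-- 3-edge-cut reduction.  `G` is a cubic graph on `V1 ⊕ V2` whose only edges between the
two sides are the three edges `(a i)(b i)` for `i : Fin 3`, and both sides are connected
(so they form an edge cut of size 3 separating the components `C1`, `C2`).  `G1` (resp.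
`G2`) is obtained from the side `C1` (resp. `C2`) by adding a new vertex (`none`) joined
to the three endpoints `a 0, a 1, a 2` (resp. `b 0, b 1, b 2`).  Then `G` is
3-edge-colorable iff both `G1` and `G2` are. -/
theorem three_edge_cut_reduction
    {V1 V2 : Type*} [Fintype V1] [Fintype V2]
    (G : SimpleGraph (V1 ⊕ V2))
    (hcubic : ∀ v, (G.neighborSet v).ncard = 3)
    (a : Fin 3 → V1) (b : Fin 3 → V2)
    (ha : Function.Injective a) (hb : Function.Injective b)
    (hcross : ∀ x y, G.Adj (Sum.inl x) (Sum.inr y) ↔ ∃ i, x = a i ∧ y = b i)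
    (hconn1 : (SimpleGraph.fromRel (fun x y : V1 => G.Adj (Sum.inl x) (Sum.inl y))).Connected)
    (hconn2 : (SimpleGraph.fromRel (fun x y : V2 => G.Adj (Sum.inr x) (Sum.inr y))).Connected) :
    (∃ c, IsProper3EdgeColoring G c) ↔
      ((∃ c, IsProper3EdgeColoring
          (SimpleGraph.fromRel (fun p q : Option V1 =>
            (∃ x y, p = some x ∧ q = some y ∧ G.Adj (Sum.inl x) (Sum.inl y)) ∨
            (p = none ∧ ∃ i, q = some (a i)))) c) ∧
       (∃ c, IsProper3EdgeColoring
          (SimpleGraph.fromRel (fun p q : Option V2 =>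
            (∃ x y, p = some x ∧ q = some y ∧ G.Adj (Sum.inr x) (Sum.inr y)) ∨
            (p = none ∧ ∃ i, q = some (b i)))) c)) := by
  classical
  have hm1 : ∀ i, G.Adj (Sum.inl (a i)) (Sum.inr (b i)) :=
    fun i => (hcross _ _).2 ⟨i, rfl, rfl⟩
  constructor
  · rintro ⟨c, hc⟩
    constructor
    · refine side_coloring (m := fun i => Sum.inr (b i)) hcubic Sum.inl_injective ha
        hm1 (fun i y => by simp) ?_ hc
      intro x w hadj
      cases w with
      | inl y => exact Or.inl ⟨y, rfl⟩
      | inr z =>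
        obtain ⟨i, hx, hz⟩ := (hcross x z).1 hadj
        exact Or.inr ⟨i, hx, by rw [hz]⟩
    · refine side_coloring (m := fun i => Sum.inl (a i)) hcubic Sum.inr_injective hb
        (fun i => (hm1 i).symm) (fun i y => by simp) ?_ hc
      intro x w hadj
      cases w with
      | inr y => exact Or.inl ⟨y, rfl⟩
      | inl z =>
        obtain ⟨i, hz, hx⟩ := (hcross z x).1 hadj.symm
        exact Or.inr ⟨i, hx, by rw [hz]⟩
  · rintro ⟨⟨c1, hc1⟩, ⟨c2, hc2⟩⟩
    set R1 : V1 → V1 → Prop := fun x y => G.Adj (Sum.inl x) (Sum.inl y) with hR1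
    set R2 : V2 → V2 → Prop := fun x y => G.Adj (Sum.inr x) (Sum.inr y) with hR2
    have hR1s : Symmetric R1 := fun x y h => h.symm
    have hR2s : Symmetric R2 := fun x y h => h.symm
    have hG1ss : ∀ x y, G.Adj (Sum.inl x) (Sum.inl y) →
        (SimpleGraph.fromRel (fun p q : Option V1 =>
          (∃ x y, p = some x ∧ q = some y ∧ R1 x y) ∨
          (p = none ∧ ∃ i, q = some (a i)))).Adj (some x) (some y) := by
      intro x y h
      exact (optAdj_some_some R1 hR1s a x y).2 ⟨fun hh => h.ne (by rw [hh]), h⟩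
    have hG2ss : ∀ x y, G.Adj (Sum.inr x) (Sum.inr y) →
        (SimpleGraph.fromRel (fun p q : Option V2 =>
          (∃ x y, p = some x ∧ q = some y ∧ R2 x y) ∨
          (p = none ∧ ∃ i, q = some (b i)))).Adj (some x) (some y) := by
      intro x y h
      exact (optAdj_some_some R2 hR2s b x y).2 ⟨fun hh => h.ne (by rw [hh]), h⟩
    have hG1ns : ∀ i, (SimpleGraph.fromRel (fun p q : Option V1 =>
          (∃ x y, p = some x ∧ q = some y ∧ R1 x y) ∨
          (p = none ∧ ∃ i, q = some (a i)))).Adj none (some (a i)) :=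
      fun i => (optAdj_none_some R1 a (a i)).2 ⟨i, rfl⟩
    have hG2ns : ∀ i, (SimpleGraph.fromRel (fun p q : Option V2 =>
          (∃ x y, p = some x ∧ q = some y ∧ R2 x y) ∨
          (p = none ∧ ∃ i, q = some (b i)))).Adj none (some (b i)) :=
      fun i => (optAdj_none_some R2 b (b i)).2 ⟨i, rfl⟩
    set f1 : Fin 3 → Fin 3 := fun i => c1 s(none, some (a i)) with hf1def
    set f2 : Fin 3 → Fin 3 := fun i => c2 s(none, some (b i)) with hf2def
    have hf1 : Function.Injective f1 := by
      intro i j h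
      by_contra hne
      exact pairwise_of_proper hc1 (hG1ns i) (hG1ns j)
        (fun hh => hne (ha (Option.some_injective _ hh))) h
    have hf2 : Function.Injective f2 := by
      intro i j h
      by_contra hne
      exact pairwise_of_proper hc2 (hG2ns i) (hG2ns j)
        (fun hh => hne (hb (Option.some_injective _ hh))) h
    set e1 := Equiv.ofBijective f1 ((Finite.injective_iff_bijective).1 hf1) with he1
    set e2 := Equiv.ofBijective f2 ((Finite.injective_iff_bijective).1 hf2) with he2
    set π : Fin 3 → Fin 3 := fun k => e1 (e2.symm k) with hπ
    have hπinj : Function.Injective π := fun k k' h =>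
      e2.symm.injective (e1.injective h)
    have hπf : ∀ i, π (f2 i) = f1 i := by
      intro i
      show e1 (e2.symm (f2 i)) = f1 i
      rw [show f2 i = e2 i from rfl, Equiv.symm_apply_apply]
      rfl
    set F : (V1 ⊕ V2) → (V1 ⊕ V2) → Fin 3 := fun p q =>
      match p, q with
      | .inl x, .inl y => c1 s(some x, some y)
      | .inr x, .inr y => π (c2 s(some x, some y))
      | .inl x, .inr _ => c1 s(none, some x)
      | .inr x, .inl y => c1 s(none, some y) with hF
    have hFsymm : ∀ p q, F p q = F q p := by
      rintro (x | x) (y | y) <;> simp only [hF]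
      · exact congrArg c1 Sym2.eq_swap
      · exact congrArg (fun e => π (c2 e)) Sym2.eq_swap
    refine ⟨Sym2.lift ⟨F, hFsymm⟩, ?_⟩
    apply proper_of_pairwise
    rintro (x | x) (y | y) (z | z) hq hq' hne <;> simp only [Sym2.lift_mk]
    · -- inl x, inl y, inl z
      show c1 s(some x, some y) ≠ c1 s(some x, some z)
      exact pairwise_of_proper hc1 (hG1ss x y hq) (hG1ss x z hq')
        (fun h => hne (congrArg Sum.inl (Option.some_injective _ h)))
    · -- inl x, inl y, inr z
      obtain ⟨i, hx, hz⟩ := (hcross x z).1 hq'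
      subst hx
      show c1 s(some (a i), some y) ≠ c1 s(none, some (a i))
      rw [show s((none : Option V1), some (a i)) = s(some (a i), (none : Option V1))
        from Sym2.eq_swap]
      exact pairwise_of_proper hc1 (hG1ss _ y hq) (hG1ns i).symm (by simp)
    · -- inl x, inr y, inl z
      obtain ⟨i, hx, hy⟩ := (hcross x y).1 hq
      subst hx
      show c1 s(none, some (a i)) ≠ c1 s(some (a i), some z)
      rw [show s((none : Option V1), some (a i)) = s(some (a i), (none : Option V1))
        from Sym2.eq_swap]
      exact (pairwise_of_proper hc1 (hG1ss _ z hq') (hG1ns i).symm (by simp)).symm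
    · -- inl x, inr y, inr z
      obtain ⟨i, hx, hy⟩ := (hcross x y).1 hq
      obtain ⟨j, hx', hz⟩ := (hcross x z).1 hq'
      have : i = j := ha (hx ▸ hx')
      exact absurd (by rw [hy, hz, this]) hne
    · -- inr x, inl y, inl z
      obtain ⟨i, hy, hx⟩ := (hcross y x).1 hq.symm
      obtain ⟨j, hz, hx'⟩ := (hcross z x).1 hq'.symm
      have : i = j := hb (hx ▸ hx')
      exact absurd (by rw [hy, hz, this]) hne
    · -- inr x, inl y, inr z
      obtain ⟨i, hy, hx⟩ := (hcross y x).1 hq.symm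
      subst hx; subst hy
      show c1 s(none, some (a i)) ≠ π (c2 s(some (b i), some z))
      have hkey : c1 s((none : Option V1), some (a i))
          = π (c2 s((none : Option V2), some (b i))) := (hπf i).symm
      rw [hkey]
      intro h
      have h2 := hπinj h
      have := pairwise_of_proper hc2 (hG2ns i).symm (hG2ss _ z hq') (by simp)
      rw [show s(some (b i), (none : Option V2)) = s((none : Option V2), some (b i))
        from Sym2.eq_swap] at this
      exact this h2
    · -- inr x, inr y, inl z
      obtain ⟨i, hz, hx⟩ := (hcross z x).1 hq'.symm
      subst hx; subst hz
      show π (c2 s(some (b i), some y)) ≠ c1 s(none, some (a i))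
      have hkey : c1 s((none : Option V1), some (a i))
          = π (c2 s((none : Option V2), some (b i))) := (hπf i).symm
      rw [hkey]
      intro h
      have h2 := hπinj h
      have := pairwise_of_proper hc2 (hG2ss _ y hq) (hG2ns i).symm (by simp)
      rw [show s(some (b i), (none : Option V2)) = s((none : Option V2), some (b i))
        from Sym2.eq_swap] at this
      exact this h2
    · -- inr x, inr y, inr z
      show π (c2 s(some x, some y)) ≠ π (c2 s(some x, some z))
      intro h
      exact pairwise_of_proper hc2 (hG2ss x y hq) (hG2ss x z hq')
        (fun h => hne (congrArg Sum.inr (Option.some_injective _ h))) (hπinj h)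
end
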